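/- For the KK Hénon–Heiles system with H = (p_x²+p_y²)/2 + (1/4)x y² + (4/3)x³ and H_2 = p_y^4 + p_y² x y² − (1/3)p_x p_y y³ − (1/12)x² y^4 − (1/72)y^6 ≥ 0, define on a region where y ≠ 0 and H_2 > 0: λ_{1,2} = −(1/2)(x + 6 p_y²/y²) ∓ (3/y²)√H_2 and μ_{1,2} = −p_x + 6 p_y x/y + 12 p_y³/y³ ± 12 (p_y/y³)√H_2. Then the Sklyanin separation relations μ_1² = −(8/3)λ_1³ + 2H + √H_2 and μ_2² = −(8/3)λ_2³ + 2H − √H_2 hold identically. -/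
import Mathlib


noncomputable section

open Real Set

/-- The Kaup–Kupershmidt Hénon–Heiles Hamiltonian (c₁ = 0, a = 1/4). -/
def HKK (x y px py : ℝ) : ℝ :=
  (px ^ 2 + py ^ 2) / 2 + 1 / 4 * x * y ^ 2 + 4 / 3 * x ^ 3

/-- The quartic second integral of the KK Hénon–Heiles system. -/
def HKK2 (x y px py : ℝ) : ℝ :=
  py ^ 4 + py ^ 2 * x * y ^ 2 - 1 / 3 * px * py * y ^ 3 -
    1 / 12 * x ^ 2 * y ^ 4 - 1 / 72 * y ^ 6

theorem KK_Sklyanin_separation_relations :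
    ∀ x y px py : ℝ, y ≠ 0 → 0 < HKK2 x y px py →
      (-px + 6 * py * x / y + 12 * py ^ 3 / y ^ 3 +
          12 * py / y ^ 3 * Real.sqrt (HKK2 x y px py)) ^ 2 =
        -(8 / 3) * (-(1 / 2) * (x + 6 * py ^ 2 / y ^ 2) -
            3 / y ^ 2 * Real.sqrt (HKK2 x y px py)) ^ 3 +
          2 * HKK x y px py + Real.sqrt (HKK2 x y px py) ∧
      (-px + 6 * py * x / y + 12 * py ^ 3 / y ^ 3 -
          12 * py / y ^ 3 * Real.sqrt (HKK2 x y px py)) ^ 2 =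
        -(8 / 3) * (-(1 / 2) * (x + 6 * py ^ 2 / y ^ 2) +
            3 / y ^ 2 * Real.sqrt (HKK2 x y px py)) ^ 3 +
          2 * HKK x y px py - Real.sqrt (HKK2 x y px py) := by
  intro x y px py hy h2
  set s := Real.sqrt (HKK2 x y px py) with hs
  have hs2 : s ^ 2 = HKK2 x y px py := Real.sq_sqrt h2.le
  have hu : y * y⁻¹ = 1 := mul_inv_cancel₀ hy
  rw [HKK2] at hs2
  constructor
  · rw [HKK]
    linear_combination (-72 * s * y⁻¹ ^ 6 + -72 * py ^ 2 * y⁻¹ ^ 6 + -36 * x * y⁻¹ ^ 4) * hs2 + (1 * s + 1 * py ^ 2 + 24 * px * py * s * y⁻¹ ^ 3 + 24 * px * py ^ 3 * y⁻¹ ^ 3 + 1 * y * s * y⁻¹ + 1 * y * py ^ 2 * y⁻¹ + 24 * y * px * py * s * y⁻¹ ^ 4 + 24 * y * px * py ^ 3 * y⁻¹ ^ 4 + 1 * y ^ 2 * s * y⁻¹ ^ 2 + 1 * y ^ 2 * py ^ 2 * y⁻¹ ^ 2 + 24 * y ^ 2 * px * py * s * y⁻¹ ^ 5 + 24 * y ^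 2 * px * py ^ 3 * y⁻¹ ^ 5 + 1 * y ^ 3 * s * y⁻¹ ^ 3 + 1 * y ^ 3 * py ^ 2 * y⁻¹ ^ 3 + 1 * y ^ 4 * s * y⁻¹ ^ 4 + 1 * y ^ 4 * py ^ 2 * y⁻¹ ^ 4 + 1 * y ^ 5 * s * y⁻¹ ^ 5 + 1 * y ^ 5 * py ^ 2 * y⁻¹ ^ 5 + -72 * x * py ^ 2 * s * y⁻¹ ^ 4 + -72 * x * py ^ 4 * y⁻¹ ^ 4 + 12 * x * px * py * y⁻¹ + -72 * x * y * py ^ 2 * s * y⁻¹ ^ 5 + -72 * x * y * py ^ 4 * y⁻¹ ^ 5 + 12 * x * y * px * py * y⁻¹ ^ 2 + (1/2) * x * y ^ 2 + 12 * x * y ^ 2 * px * py * y⁻¹ ^ 3 + (1/2) * x * y ^ 3 * y⁻¹ + (1/2) * x * y ^ 4 * y⁻¹ ^ 2 + (1/2) * x * y ^ 5 * y⁻¹ ^ 3 + 6 * x ^ 2 * s * y⁻¹ ^ 2 + -30 * x ^ 2 * py ^ 2 * y⁻¹ ^ 2 + 6 * x ^ 2 * y * s * y⁻¹ ^ 3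 + -30 * x ^ 2 * y * py ^ 2 * y⁻¹ ^ 3 + 6 * x ^ 2 * y ^ 2 * s * y⁻¹ ^ 4 + 6 * x ^ 2 * y ^ 2 * py ^ 2 * y⁻¹ ^ 4 + 6 * x ^ 2 * y ^ 3 * s * y⁻¹ ^ 5 + 6 * x ^ 2 * y ^ 3 * py ^ 2 * y⁻¹ ^ 5 + 3 * x ^ 3 + 3 * x ^ 3 * y * y⁻¹ + 3 * x ^ 3 * y ^ 2 * y⁻¹ ^ 2 + 3 * x ^ 3 * y ^ 3 * y⁻¹ ^ 3) * hu
  · rw [HKK]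
    linear_combination (72 * s * y⁻¹ ^ 6 + -72 * py ^ 2 * y⁻¹ ^ 6 + -36 * x * y⁻¹ ^ 4) * hs2 + (-1 * s + 1 * py ^ 2 + -24 * px * py * s * y⁻¹ ^ 3 + 24 * px * py ^ 3 * y⁻¹ ^ 3 + -1 * y * s * y⁻¹ + 1 * y * py ^ 2 * y⁻¹ + -24 * y * px * py * s * y⁻¹ ^ 4 + 24 * y * px * py ^ 3 * y⁻¹ ^ 4 + -1 * y ^ 2 * s * y⁻¹ ^ 2 + 1 * y ^ 2 * py ^ 2 * y⁻¹ ^ 2 + -24 * y ^ 2 * px * py * s * y⁻¹ ^ 5 + 24 * y ^ 2 * px * py ^ 3 * y⁻¹ ^ 5 + -1 * y ^ 3 * s * y⁻¹ ^ 3 + 1 * y ^ 3 * py ^ 2 * y⁻¹ ^ 3 + -1 * y ^ 4 * s * y⁻¹ ^ 4 + 1 * y ^ 4 * py ^ 2 * y⁻¹ ^ 4 + -1 * y ^ 5 * s * y⁻¹ ^ 5 + 1 * y ^ 5 * py ^ 2 * y⁻¹ ^ 5 + 72 * x * py ^ 2 * s * y⁻¹ ^ 4 + -72 * x * py ^ 4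 * y⁻¹ ^ 4 + 12 * x * px * py * y⁻¹ + 72 * x * y * py ^ 2 * s * y⁻¹ ^ 5 + -72 * x * y * py ^ 4 * y⁻¹ ^ 5 + 12 * x * y * px * py * y⁻¹ ^ 2 + (1/2) * x * y ^ 2 + 12 * x * y ^ 2 * px * py * y⁻¹ ^ 3 + (1/2) * x * y ^ 3 * y⁻¹ + (1/2) * x * y ^ 4 * y⁻¹ ^ 2 + (1/2) * x * y ^ 5 * y⁻¹ ^ 3 + -6 * x ^ 2 * s * y⁻¹ ^ 2 + -30 * x ^ 2 * py ^ 2 * y⁻¹ ^ 2 + -6 * x ^ 2 * y * s * y⁻¹ ^ 3 + -30 * x ^ 2 * y * py ^ 2 * y⁻¹ ^ 3 + -6 * x ^ 2 * y ^ 2 * s * y⁻¹ ^ 4 + 6 * x ^ 2 * y ^ 2 * py ^ 2 * y⁻¹ ^ 4 + -6 * x ^ 2 * y ^ 3 * s * y⁻¹ ^ 5 + 6 * x ^ 2 * y ^ 3 * py ^ 2 * y⁻¹ ^ 5 + 3 * x ^ 3 + 3 * x ^ 3 * y * y⁻¹ + 3 * x ^ 3 * y ^ 2 * y⁻¹ ^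 2 + 3 * x ^ 3 * y ^ 3 * y⁻¹ ^ 3) * hu
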